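/- Let f : ℝⁿ → ℝ ∪ {+∞} be proper and lower semicontinuous, γ > 0, and suppose the proximal operator prox_{γf}(x) := argmin_z ( f(z) + (1/(2γ))‖z−x‖² ) is single-valued and continuous on ℝⁿ. Then the lower Moreau envelope M_γ f is differentiable everywhere with ∇M_γ f(x) = (1/γ)(x − prox_{γf}(x)). -/
import Mathlib


open scoped RealInnerProductSpace
open Filter Topology

noncomputable section

/-- Lower Moreau envelope (real-valued via `toReal`) of an extended-real valued function. -/
def moreauEnv {n : ℕ} (γ : ℝ) (f : EuclideanSpace ℝ (Fin n) → EReal)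
    (x : EuclideanSpace ℝ (Fin n)) : ℝ :=
  (⨅ z, (f z + ((‖z - x‖ ^ 2 / (2 * γ) : ℝ) : EReal))).toReal

private lemma norm_sq_expand {n : ℕ} (u x y : EuclideanSpace ℝ (Fin n)) :
    ‖u - y‖ ^ 2 = ‖u - x‖ ^ 2 - 2 * ⟪u - x, y - x⟫ + ‖y - x‖ ^ 2 := by
  have h : u - y = (u - x) - (y - x) := by abel
  rw [h, norm_sub_sq_real]

theorem stmt_4 {n : ℕ} (γ : ℝ) (hγ : 0 < γ)
    (f : EuclideanSpace ℝ (Fin n) → EReal)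
    (hproper : ∃ x, f x ≠ ⊤) (hnbot : ∀ x, f x ≠ ⊥)
    (hlsc : LowerSemicontinuous f)
    (p : EuclideanSpace ℝ (Fin n) → EuclideanSpace ℝ (Fin n))
    (hp_cont : Continuous p)
    (hp_prox : ∀ x z,
      IsMinOn (fun w => f w + ((‖w - x‖ ^ 2 / (2 * γ) : ℝ) : EReal)) Set.univ z ↔ z = p x) :
    ∀ x, HasGradientAt (moreauEnv γ f) ((1 / γ) • (x - p x)) x := by
  obtain ⟨x₀, hx₀⟩ := hproper
  have hmin : ∀ x, IsMinOn (fun w => f w + ((‖w - x‖ ^ 2 / (2 * γ) : ℝ) : EReal))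
      Set.univ (p x) := fun x => (hp_prox x (p x)).mpr rfl
  have hne_top : ∀ x, f (p x) ≠ ⊤ := by
    intro x htop
    have h1 := hmin x (Set.mem_univ x₀)
    simp only [htop] at h1
    rw [EReal.top_add_of_ne_bot (EReal.coe_ne_bot _)] at h1
    exact absurd (top_le_iff.mp h1)
      (EReal.add_lt_top hx₀ (EReal.coe_ne_top _)).ne
  -- the infimum is attained at p x
  have hinf : ∀ x, (⨅ z, (f z + ((‖z - x‖ ^ 2 / (2 * γ) : ℝ) : EReal)))
      = f (p x) + ((‖p x - x‖ ^ 2 / (2 * γ) : ℝ) : EReal) := by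
    intro x
    refine le_antisymm (iInf_le _ (p x)) (le_iInf fun w => hmin x (Set.mem_univ w))
  set r : EuclideanSpace ℝ (Fin n) → ℝ := fun x => (f (p x)).toReal with hr
  have hcoe : ∀ x, f (p x) = ((r x : ℝ) : EReal) :=
    fun x => (EReal.coe_toReal (hne_top x) (hnbot _)).symm
  have henv : ∀ x, moreauEnv γ f x = r x + ‖p x - x‖ ^ 2 / (2 * γ) := by
    intro x
    rw [moreauEnv, hinf, hcoe, ← EReal.coe_add, EReal.toReal_coe]
  have henv_le : ∀ x y, moreauEnv γ f y ≤ r x + ‖p x - y‖ ^ 2 / (2 * γ) := by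
    intro x y
    have h1 : (⨅ z, (f z + ((‖z - y‖ ^ 2 / (2 * γ) : ℝ) : EReal)))
        ≤ ((r x + ‖p x - y‖ ^ 2 / (2 * γ) : ℝ) : EReal) := by
      have := iInf_le (fun z => f z + ((‖z - y‖ ^ 2 / (2 * γ) : ℝ) : EReal)) (p x)
      rwa [hcoe x, ← EReal.coe_add] at this
    have h2 := EReal.toReal_le_toReal h1 ?_ (EReal.coe_ne_top _)
    · rwa [EReal.toReal_coe] at h2
    · rw [hinf y, hcoe y, ← EReal.coe_add]
      exact EReal.coe_ne_bot _
  -- key one-sided estimate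
  have key : ∀ x y, moreauEnv γ f y - moreauEnv γ f x
      - ⟪(1 / γ) • (x - p x), y - x⟫ ≤ ‖y - x‖ ^ 2 / (2 * γ) := by
    intro x y
    have h1 : moreauEnv γ f y - moreauEnv γ f x
        ≤ (‖p x - y‖ ^ 2 - ‖p x - x‖ ^ 2) / (2 * γ) := by
      have := henv_le x y
      rw [henv x] at *
      linarith [henv_le x y, sub_div (‖p x - y‖ ^ 2) (‖p x - x‖ ^ 2) (2 * γ)]
    have h2 : ‖p x - y‖ ^ 2 - ‖p x - x‖ ^ 2
        = -2 * ⟪p x - x, y - x⟫ + ‖y - x‖ ^ 2 := by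
      rw [norm_sq_expand (p x) x y]; ring
    have h3 : ⟪(1 / γ) • (x - p x), y - x⟫ = (1 / γ) * ⟪x - p x, y - x⟫ :=
      real_inner_smul_left _ _ _
    have h4 : ⟪x - p x, y - x⟫ = -⟪p x - x, y - x⟫ := by
      rw [← neg_sub (p x) x, inner_neg_left]
    have h2γ : (2 * γ) ≠ 0 := by positivity
    rw [h3, h4]
    calc moreauEnv γ f y - moreauEnv γ f x - 1 / γ * -⟪p x - x, y - x⟫
        ≤ (-2 * ⟪p x - x, y - x⟫ + ‖y - x‖ ^ 2) / (2 * γ)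
            - 1 / γ * -⟪p x - x, y - x⟫ := by rw [← h2]; linarith
      _ = ‖y - x‖ ^ 2 / (2 * γ) := by field_simp; ring
  intro x
  rw [hasGradientAt_iff_isLittleO, Asymptotics.isLittleO_iff]
  intro ε hε
  set g := (1 / γ) • (x - p x) with hg
  have hcont : Tendsto (fun y => ‖(1 / γ) • (y - p y) - g‖ + ‖y - x‖ / (2 * γ))
      (𝓝 x) (𝓝 0) := by
    have hc : Continuous fun y : EuclideanSpace ℝ (Fin n) =>
        ‖(1 / γ) • (y - p y) - g‖ + ‖y - x‖ / (2 * γ) := by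
      fun_prop
    have h0 : ‖(1 / γ) • (x - p x) - g‖ + ‖x - x‖ / (2 * γ) = 0 := by
      simp [hg]
    exact h0 ▸ hc.tendsto x
  filter_upwards [hcont.eventually (eventually_le_nhds hε)] with y hy
  have hny : (0:ℝ) ≤ ‖y - x‖ := norm_nonneg _
  have hbound : |moreauEnv γ f y - moreauEnv γ f x - ⟪g, y - x⟫|
      ≤ (‖(1 / γ) • (y - p y) - g‖ + ‖y - x‖ / (2 * γ)) * ‖y - x‖ := by
    rw [abs_le]
    constructor
    · -- lower bound
      have h1 := key y x
      have h2 : ⟪(1 / γ) • (y - p y), x - y⟫ = -⟪(1 / γ) • (y - p y), y - x⟫ := by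
        rw [← neg_sub y x, inner_neg_right]
      have h3 : ‖x - y‖ = ‖y - x‖ := norm_sub_rev _ _
      rw [h2, h3] at h1
      -- h1 : M x - M y + ⟪gy, y - x⟫ ≤ ‖y-x‖²/(2γ)
      have h4 : ⟪(1 / γ) • (y - p y), y - x⟫ - ⟪g, y - x⟫
          = ⟪(1 / γ) • (y - p y) - g, y - x⟫ := (inner_sub_left _ _ _).symm
      have h5 : -(‖(1 / γ) • (y - p y) - g‖ * ‖y - x‖)
          ≤ ⟪(1 / γ) • (y - p y) - g, y - x⟫ :=
        neg_abs_le _ |>.trans' (by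
          have := abs_real_inner_le_norm ((1 / γ) • (y - p y) - g) (y - x)
          linarith)
      have h6 : ‖y - x‖ ^ 2 / (2 * γ) = ‖y - x‖ / (2 * γ) * ‖y - x‖ := by ring
      nlinarith [norm_nonneg ((1 / γ) • (y - p y) - g)]
    · -- upper bound
      have h1 := key x y
      have h6 : ‖y - x‖ ^ 2 / (2 * γ) = ‖y - x‖ / (2 * γ) * ‖y - x‖ := by ring
      nlinarith [norm_nonneg ((1 / γ) • (y - p y) - g)]
  calc ‖moreauEnv γ f y - moreauEnv γ f x - ⟪g, y - x⟫‖
      = |moreauEnv γ f y - moreauEnv γ f x - ⟪g, y - x⟫| := Real.norm_eq_abs _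
    _ ≤ (‖(1 / γ) • (y - p y) - g‖ + ‖y - x‖ / (2 * γ)) * ‖y - x‖ := hbound
    _ ≤ ε * ‖y - x‖ := by
        apply mul_le_mul_of_nonneg_right hy hny
    _ = ε * ‖y - x‖ := rfl
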